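/- For partitions λ_1, λ_3, the identity ∏_{k∈ℤ}(1 − Q^{−1} q^k)^{C_k(λ_1,λ_3)} = (−Q)^{−|λ_1|−|λ_3|} q^{(κ(λ_1)+κ(λ_3))/2} ∏_{k∈ℤ}(1 − Q q^k)^{C_k(λ_1^t, λ_3^t)} holds as rational functions in q^{1/2} and Q. -/

import Mathlib

/-- A partition: a weakly decreasing sequence of natural numbers with finitely many
nonzero parts.  `parts i` is the `(i+1)`-st part (so indexing in the paper is shifted by one). -/
structure Ptn where
  parts : ℕ → ℕ
  anti : ∀ ⦃i j : ℕ⦄, i ≤ j → parts j ≤ parts i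
  bnd : ℕ
  bnd_spec : ∀ i, bnd ≤ i → parts i = 0

/-- The empty partition. -/
def zeroP : Ptn := ⟨fun _ => 0, fun _ _ _ => le_rfl, 0, fun _ _ => rfl⟩

/-- `|μ| = Σ_j μ_j`. -/
def psize (μ : Ptn) : ℕ := ∑ i ∈ Finset.range μ.bnd, μ.parts i

/-- `κ(μ) = |μ| + Σ_j μ_j (μ_j - 2 j)` (the sum over the nonzero parts, `j` being the
1-based index of the part). -/
def kappa (μ : Ptn) : ℤ :=
  (psize μ : ℤ) + ∑ i ∈ Finset.range μ.bnd, (μ.parts i : ℤ) * ((μ.parts i : ℤ) - 2 * (i + 1))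

/-- The conjugate (transposed) partition: `(μ^t)_i = #{ j : μ_j ≥ i }`. -/
def pconj (μ : Ptn) : Ptn where
  parts i := ((Finset.range μ.bnd).filter (fun j => i + 1 ≤ μ.parts j)).card
  anti := by
    intro i j hij
    apply Finset.card_le_card
    intro a ha
    simp only [Finset.mem_filter] at ha ⊢
    exact ⟨ha.1, by omega⟩
  bnd := μ.parts 0
  bnd_spec := by
    intro i hi
    rw [Finset.card_eq_zero, Finset.filter_eq_empty_iff]
    intro a _
    have := μ.anti (Nat.zero_le a)
    omega

/-- The cells of the skew Young diagram `λ/μ`, with 0-based coordinates: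
`(i, j)` is a cell iff `μ_{i+1} ≤ j < λ_{i+1}`. -/
def cellsF (lam mu : Ptn) : Finset (ℕ × ℕ) :=
  (Finset.range lam.bnd ×ˢ Finset.range (lam.parts 0)).filter
    (fun c => mu.parts c.1 ≤ c.2 ∧ c.2 < lam.parts c.1)

open scoped LaurentSeries
noncomputable section

/-- `f_μ(q) = (q/(q-1)) Σ_{i ≥ 1} (q^{μ_i - i} - q^{-i})`, as a rational function in `q = X`.
(The summands vanish for `i > bnd`, so the sum is finite.) -/
def fOne (μ : Ptn) : RatFunc ℚ :=
  (RatFunc.X / (RatFunc.X - 1)) *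
    ∑ i ∈ Finset.range μ.bnd,
      ((RatFunc.X : RatFunc ℚ) ^ ((μ.parts i : ℤ) - (i + 1)) - RatFunc.X ^ (-((i : ℤ) + 1)))

/-- `f_{μ,ν}(q) = (q - 2 + q^{-1}) f_μ(q) f_ν(q) + f_μ(q) + f_ν(q)`. -/
def fTwo (μ ν : Ptn) : RatFunc ℚ :=
  (RatFunc.X - 2 + RatFunc.X⁻¹) * fOne μ * fOne ν + fOne μ + fOne ν

/-- `C_k(μ,ν)`: the coefficient of `q^k` in the Laurent polynomial `f_{μ,ν}(q)`
(read off from the Laurent-series expansion of the rational function `f_{μ,ν}`). -/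
def Ck (μ ν : Ptn) (k : ℤ) : ℚ := ((fTwo μ ν : LaurentSeries ℚ)).coeff k
/-- The field `ℚ(t, Q)` of rational functions in `t = q^{1/2}` and `Q`. -/
abbrev F2 : Type := RatFunc (RatFunc ℚ)

/-- The variable `Q`. -/
def QQ : F2 := RatFunc.X

/-- The variable `t = q^{1/2}` (so `q = t^2`). -/
def tt : F2 := RatFunc.C (RatFunc.X)

/-!
Since `f_μ(q) = (q/(q-1)) Σ_i (q^{μ_i-i} - q^{-i})` is the content generating function
`Σ_{(i,j) ∈ μ} q^{j-i}`, `f_{μ,ν}` is a Laurent polynomial with integer coefficients `C_k`, and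
transposing a partition negates contents, so `C_k(μ^t, ν^t) = C_{-k}(μ, ν)`. Each factor flips as
`1 - Q⁻¹ q^k = (-Q)⁻¹ q^k (1 - Q q^{-k})`, so the left side equals the right-hand product times
`(-Q)^{-Σ C_k} q^{Σ k C_k}`. Multiplication by `q - 2 + q⁻¹` is a second difference on
coefficients, which kills both `Σ C_k` and `Σ k C_k`; hence these sums only see `f_μ + f_ν`,
giving `|μ| + |ν|` and the total content `(κ(μ) + κ(ν)) / 2`.
-/

open LaurentPolynomial

lemma zpow_sum₀ {ι K : Type*} [CommGroupWithZero K] {a : K} (ha : a ≠ 0) (s : Finset ι)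
    (f : ι → ℤ) : a ^ (∑ i ∈ s, f i) = ∏ i ∈ s, a ^ f i := by
  classical
  induction s using Finset.induction_on with
  | empty => simp
  | insert i s hi ih => rw [Finset.sum_insert hi, Finset.prod_insert hi, zpow_add₀ ha, ih]

lemma sum_range_zpow_sub_eq {K : Type*} [Field K] {x : K} (hx0 : x ≠ 0) (hx1 : x ≠ 1) (i m : ℕ) :
    ∑ j ∈ Finset.range m, x ^ ((j : ℤ) - i)
      = x / (x - 1) * (x ^ ((m : ℤ) - (i + 1)) - x ^ (-((i : ℤ) + 1))) := by
  have hx1' : x - 1 ≠ 0 := sub_ne_zero.mpr hx1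
  have hsplit (n : ℕ) : x ^ ((n : ℤ) - i) = x ^ n * x ^ (-(i : ℤ)) := by
    rw [sub_eq_add_neg, zpow_add₀ hx0, zpow_natCast]
  simp_rw [hsplit, ← Finset.sum_mul, geom_sum_eq hx1]
  rw [show (m : ℤ) - (i + 1) = m + -(i : ℤ) + -1 by ring,
    show -((i : ℤ) + 1) = -(i : ℤ) + -1 by ring, zpow_add₀ hx0, zpow_add₀ hx0, zpow_add₀ hx0, zpow_natCast, zpow_neg_one]
  field_simp

namespace LaurentPolynomial

def coeffSum : ℤ[T;T⁻¹] →+ ℤ :=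
  (Finsupp.liftAddHom fun _ => AddMonoidHom.id ℤ).comp
    AddMonoidAlgebra.coeffAddEquiv.toAddMonoidHom

def coeffMoment : ℤ[T;T⁻¹] →+ ℤ :=
  (Finsupp.liftAddHom fun k => AddMonoidHom.mulLeft k).comp
    AddMonoidAlgebra.coeffAddEquiv.toAddMonoidHom

lemma coeffSum_apply (p : ℤ[T;T⁻¹]) : coeffSum p = p.coeff.sum fun _ n => n := rfl

lemma coeffMoment_apply (p : ℤ[T;T⁻¹]) : coeffMoment p = p.coeff.sum fun k n => k * n := rfl

lemma coeffSum_C_mul_T (a n : ℤ) : coeffSum (C a * T n) = a := by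
  rw [← single_eq_C_mul_T, coeffSum_apply, AddMonoidAlgebra.coeff_single,
    Finsupp.sum_single_index rfl]

lemma coeffMoment_C_mul_T (a n : ℤ) : coeffMoment (C a * T n) = n * a := by
  rw [← single_eq_C_mul_T, coeffMoment_apply, AddMonoidAlgebra.coeff_single,
    Finsupp.sum_single_index (mul_zero n)]

lemma coeffSum_T (n : ℤ) : coeffSum (T n) = 1 := by
  simpa using coeffSum_C_mul_T 1 n

lemma coeffMoment_T (n : ℤ) : coeffMoment (T n) = n := by
  simpa using coeffMoment_C_mul_T 1 n

lemma coeffSum_mul_T (p : ℤ[T;T⁻¹]) (m : ℤ) : coeffSum (p * T m) = coeffSum p := by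
  induction p using LaurentPolynomial.induction_on' with
  | add p q hp hq => rw [add_mul, map_add, map_add, hp, hq]
  | C_mul_T n a => rw [mul_assoc, ← T_add, coeffSum_C_mul_T, coeffSum_C_mul_T]

lemma coeffMoment_mul_T (p : ℤ[T;T⁻¹]) (m : ℤ) :
    coeffMoment (p * T m) = coeffMoment p + m * coeffSum p := by
  induction p using LaurentPolynomial.induction_on' with
  | add p q hp hq => rw [add_mul, map_add, map_add, map_add, hp, hq]; ring
  | C_mul_T n a =>
    rw [mul_assoc, ← T_add, coeffMoment_C_mul_T, coeffMoment_C_mul_T, coeffSum_C_mul_T]; ring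

def secondDiff : ℤ[T;T⁻¹] := T 1 - 2 + T (-1)

lemma secondDiff_mul (p : ℤ[T;T⁻¹]) : secondDiff * p = p * T 1 - (p + p) + p * T (-1) := by
  rw [secondDiff]; ring

lemma coeffSum_secondDiff_mul (p : ℤ[T;T⁻¹]) : coeffSum (secondDiff * p) = 0 := by
  rw [secondDiff_mul, map_add, map_sub, map_add, coeffSum_mul_T, coeffSum_mul_T]; ring

lemma coeffMoment_secondDiff_mul (p : ℤ[T;T⁻¹]) : coeffMoment (secondDiff * p) = 0 := by
  rw [secondDiff_mul, map_add, map_sub, map_add, coeffMoment_mul_T, coeffMoment_mul_T]; ring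

lemma invert_secondDiff : invert secondDiff = secondDiff := by
  rw [secondDiff, map_add, map_sub, invert_T, invert_T, map_ofNat, neg_neg]; ring

lemma finprod_zpow_coeff {K : Type*} [CommGroupWithZero K] (g : ℤ → K) (p : ℤ[T;T⁻¹]) :
    ∏ᶠ k, g k ^ p.coeff k = p.coeff.prod fun k n => g k ^ n :=
  finprod_eq_prod_of_mulSupport_subset _ fun k hk => by
    contrapose! hk
    simp [Finsupp.notMem_support_iff.mp hk]

lemma finprod_mul_zpow_mul_zpow_coeff {K : Type*} [CommGroupWithZero K] {a b : K} (ha : a ≠ 0)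
    (hb : b ≠ 0) (h : ℤ → K) (p : ℤ[T;T⁻¹]) :
    ∏ᶠ k, (a * b ^ k * h (-k)) ^ p.coeff k
      = a ^ coeffSum p * b ^ coeffMoment p * ∏ᶠ k, h k ^ (invert p).coeff k := by
  have hinv : (invert p).coeff = p.coeff.equivMapDomain (Equiv.neg ℤ) := by
    ext k; simp
  rw [finprod_zpow_coeff, finprod_zpow_coeff, hinv, Finsupp.prod_equivMapDomain, coeffSum_apply,
    coeffMoment_apply, Finsupp.sum, Finsupp.sum, zpow_sum₀ ha, zpow_sum₀ hb]
  simp only [Finsupp.prod, mul_zpow, Finset.prod_mul_distrib, ← zpow_mul, Equiv.neg_apply]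

end LaurentPolynomial

namespace RatFunc

variable {K : Type*} [Field K]

lemma X_ne_one : (X : RatFunc K) ≠ 1 := by
  intro h
  apply Polynomial.X_ne_C (R := K) 1
  apply algebraMap_injective K
  simpa using h

variable (K) in
def evalX : ℤ[T;T⁻¹] →+* RatFunc K := eval₂ (Int.castRingHom _) (Units.mk0 X X_ne_zero)

lemma evalX_T (n : ℤ) : evalX K (T n) = X ^ n := by
  simp [evalX]

lemma coeff_coe_evalX (p : ℤ[T;T⁻¹]) (k : ℤ) :
    ((evalX K p : RatFunc K) : K⸨X⸩).coeff k = p.coeff k := by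
  induction p using LaurentPolynomial.induction_on' with
  | add p q hp hq => simp [hp, hq]
  | C_mul_T n a =>
    have hsingle : ((evalX K (LaurentPolynomial.C a * T n) : RatFunc K) : K⸨X⸩)
        = HahnSeries.single n (a : K) := by
      rw [map_mul, evalX_T, map_mul, map_zpow₀, coe_X, ← single_zpow, evalX, eval₂_C, eq_intCast,
        map_intCast, ← HahnSeries.single_zero_intCast, HahnSeries.single_mul_single, zero_add,
        mul_one]
    rw [hsingle, ← single_eq_C_mul_T, AddMonoidAlgebra.coeff_single, HahnSeries.coeff_single,
      Finsupp.single_apply]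
    simp [eq_comm]

end RatFunc

def cellContent (c : ℕ × ℕ) : ℤ := c.2 - c.1

namespace Ptn

def cells (μ : Ptn) : Finset (ℕ × ℕ) := cellsF μ zeroP

lemma lt_bnd_of_lt_parts (μ : Ptn) {i j : ℕ} (h : j < μ.parts i) : i < μ.bnd := by
  by_contra! hi
  have := μ.bnd_spec i hi
  omega

lemma mem_cells {μ : Ptn} {c : ℕ × ℕ} : c ∈ μ.cells ↔ c.2 < μ.parts c.1 := by
  rw [cells, cellsF, Finset.mem_filter, Finset.mem_product, Finset.mem_range, Finset.mem_range]
  refine ⟨fun h => h.2.2, fun h => ⟨⟨μ.lt_bnd_of_lt_parts h, ?_⟩, Nat.zero_le _, h⟩⟩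
  exact h.trans_le (μ.anti (Nat.zero_le _))

lemma lt_pconj_parts_iff (μ : Ptn) (i j : ℕ) : j < (pconj μ).parts i ↔ i < μ.parts j := by
  change j < ((Finset.range μ.bnd).filter fun a => i + 1 ≤ μ.parts a).card ↔ _
  constructor
  · intro h
    by_contra! hj
    have hcol : (Finset.range μ.bnd).filter (fun a => i + 1 ≤ μ.parts a) ⊆ Finset.range j := by
      intro a ha
      rw [Finset.mem_filter] at ha
      rw [Finset.mem_range]
      by_contra! haj
      have := μ.anti haj
      omega
    simpa using h.trans_le (Finset.card_le_card hcol)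
  · intro h
    have hcol : Finset.range (j + 1) ⊆ (Finset.range μ.bnd).filter fun a => i + 1 ≤ μ.parts a := by
      intro a ha
      rw [Finset.mem_range] at ha
      have hia : i < μ.parts a := h.trans_le (μ.anti (Nat.le_of_lt_succ ha))
      rw [Finset.mem_filter, Finset.mem_range]
      exact ⟨μ.lt_bnd_of_lt_parts hia, hia⟩
    simpa using Finset.card_le_card hcol

lemma cells_pconj (μ : Ptn) : (pconj μ).cells = μ.cells.map (Equiv.prodComm ℕ ℕ).toEmbedding := by
  ext c
  rw [Finset.mem_map_equiv, mem_cells, mem_cells, lt_pconj_parts_iff]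
  rfl

lemma sum_cells {M : Type*} [AddCommMonoid M] (μ : Ptn) (g : ℕ × ℕ → M) :
    ∑ c ∈ μ.cells, g c = ∑ i ∈ Finset.range μ.bnd, ∑ j ∈ Finset.range (μ.parts i), g (i, j) := by
  rw [cells, cellsF, Finset.sum_filter, Finset.sum_product]
  refine Finset.sum_congr rfl fun i _ => ?_
  rw [← Finset.sum_filter]
  congr 1
  ext j
  simp only [Finset.mem_filter, Finset.mem_range, zeroP, Nat.zero_le, true_and,
    and_iff_right_iff_imp]
  exact fun h => h.trans_le (μ.anti (Nat.zero_le i))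

lemma card_cells (μ : Ptn) : μ.cells.card = psize μ := by
  rw [Finset.card_eq_sum_ones, sum_cells]
  simp [psize]

lemma kappa_eq_two_mul_sum_cellContent (μ : Ptn) :
    kappa μ = 2 * ∑ c ∈ μ.cells, cellContent c := by
  have hrow (i m : ℕ) :
      2 * ∑ j ∈ Finset.range m, cellContent (i, j) = (m : ℤ) * (m - 2 * (i + 1)) + m := by
    induction m with
    | zero => simp
    | succ m ih => rw [Finset.sum_range_succ, mul_add, ih, cellContent]; push_cast; ring
  rw [sum_cells, Finset.mul_sum, Finset.sum_congr rfl fun i _ => hrow i (μ.parts i), kappa, psize,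
    Finset.sum_add_distrib]
  push_cast
  ring

lemma fOne_eq_sum_cells (μ : Ptn) :
    fOne μ = ∑ c ∈ μ.cells, (RatFunc.X : RatFunc ℚ) ^ cellContent c := by
  rw [fOne, Finset.mul_sum, sum_cells]
  exact Finset.sum_congr rfl fun i _ =>
    (sum_range_zpow_sub_eq RatFunc.X_ne_zero RatFunc.X_ne_one i (μ.parts i)).symm

def contentPoly (μ : Ptn) : ℤ[T;T⁻¹] := ∑ c ∈ μ.cells, T (cellContent c)

lemma evalX_contentPoly (μ : Ptn) : RatFunc.evalX ℚ (contentPoly μ) = fOne μ := by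
  simp [contentPoly, RatFunc.evalX_T, fOne_eq_sum_cells]

lemma invert_contentPoly (μ : Ptn) : invert (contentPoly μ) = contentPoly (pconj μ) := by
  rw [contentPoly, contentPoly, cells_pconj, Finset.sum_map, map_sum]
  refine Finset.sum_congr rfl fun c _ => ?_
  rw [invert_T, cellContent, cellContent, neg_sub]
  rfl

lemma coeffSum_contentPoly (μ : Ptn) : coeffSum (contentPoly μ) = psize μ := by
  simp [contentPoly, coeffSum_T, card_cells]

lemma two_mul_coeffMoment_contentPoly (μ : Ptn) : 2 * coeffMoment (contentPoly μ) = kappa μ := by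
  simp [contentPoly, coeffMoment_T, kappa_eq_two_mul_sum_cellContent]

def flopPoly (μ ν : Ptn) : ℤ[T;T⁻¹] :=
  secondDiff * contentPoly μ * contentPoly ν + contentPoly μ + contentPoly ν

lemma evalX_flopPoly (μ ν : Ptn) : RatFunc.evalX ℚ (flopPoly μ ν) = fTwo μ ν := by
  simp [flopPoly, fTwo, secondDiff, evalX_contentPoly, RatFunc.evalX_T, map_ofNat]

lemma Ck_eq_coeff_flopPoly (μ ν : Ptn) (k : ℤ) : Ck μ ν k = (flopPoly μ ν).coeff k := by
  rw [Ck, ← evalX_flopPoly, RatFunc.coeff_coe_evalX]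

lemma invert_flopPoly (μ ν : Ptn) : invert (flopPoly μ ν) = flopPoly (pconj μ) (pconj ν) := by
  simp only [flopPoly, map_add, map_mul, invert_secondDiff, invert_contentPoly]

lemma coeffSum_flopPoly (μ ν : Ptn) : coeffSum (flopPoly μ ν) = psize μ + psize ν := by
  rw [flopPoly, mul_assoc, map_add, map_add, coeffSum_secondDiff_mul, coeffSum_contentPoly,
    coeffSum_contentPoly, zero_add]

lemma two_mul_coeffMoment_flopPoly (μ ν : Ptn) :
    2 * coeffMoment (flopPoly μ ν) = kappa μ + kappa ν := by
  rw [flopPoly, mul_assoc, map_add, map_add, coeffMoment_secondDiff_mul, zero_add, mul_add,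
    two_mul_coeffMoment_contentPoly, two_mul_coeffMoment_contentPoly]

end Ptn

/-- For partitions `λ₁, λ₃`,
`∏_{k∈ℤ} (1 - Q⁻¹ q^k)^{C_k(λ₁,λ₃)}
  = (-Q)^{-|λ₁|-|λ₃|} q^{(κ(λ₁)+κ(λ₃))/2} ∏_{k∈ℤ} (1 - Q q^k)^{C_k(λ₁^t,λ₃^t)}`
as rational functions in `q^{1/2}` and `Q` (here `q = t²`, and the integer exponents
`C_k` are extracted via `Rat.num`, the `C_k` being integers). -/
theorem flop_product_identity (l1 l3 : Ptn) :
    (∏ᶠ k : ℤ, (1 - QQ⁻¹ * tt ^ (2 * k)) ^ (Ck l1 l3 k).num) =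
      (-QQ) ^ (-((psize l1 : ℤ) + (psize l3 : ℤ))) * tt ^ (kappa l1 + kappa l3) *
        ∏ᶠ k : ℤ, (1 - QQ * tt ^ (2 * k)) ^ (Ck (pconj l1) (pconj l3) k).num := by
  have hQ : QQ ≠ 0 := RatFunc.X_ne_zero
  have ht : tt ≠ 0 := (map_ne_zero _).mpr RatFunc.X_ne_zero
  have hflip (k : ℤ) :
      1 - QQ⁻¹ * tt ^ (2 * k) = (-QQ)⁻¹ * (tt ^ 2) ^ k * (1 - QQ * tt ^ (2 * -k)) := by
    rw [← zpow_natCast, ← zpow_mul, Nat.cast_ofNat, mul_neg, zpow_neg]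
    field_simp
    ring
  simp_rw [Ptn.Ck_eq_coeff_flopPoly, Rat.num_intCast, hflip]
  rw [finprod_mul_zpow_mul_zpow_coeff (inv_ne_zero (neg_ne_zero.mpr hQ)) (pow_ne_zero 2 ht)
    (fun k => 1 - QQ * tt ^ (2 * k)), Ptn.invert_flopPoly, Ptn.coeffSum_flopPoly,
    ← Ptn.two_mul_coeffMoment_flopPoly, inv_zpow', ← zpow_natCast, Nat.cast_ofNat, ← zpow_mul]
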